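/- The disjunctive variant of relative coobservability (obtained by replacing 'and' with 'or' between the two implications in condition (i) of Definition 1) is not closed under set union: there exist a finite alphabet Σ, a plant G (languages L_m(G), L(G) with L̄_m(G) = L(G)), observable event subsets Σ_{o,1}, Σ_{o,2} ⊆ Σ with natural projections P₁, P₂, controllable event subsets Σ_{c,1}, Σ_{c,2} ⊆ Σ, an ambient language C ⊆ L_m(G), and languages K₁, K₂ ⊆ C such that K₁ and K₂ each satisfy the disjunctive variant of C̄-coobservability but K₁ ∪ K₂ does not. -/
import Mathlib


/-! Languages over a finite alphabet `α`: strings are `List α`.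
`So1, So2` are the observable event subsets `Σ_{o,1}, Σ_{o,2}`;
`Sc1, Sc2` are the controllable event subsets `Σ_{c,1}, Σ_{c,2}`. -/

variable {α : Type*}

/-- Prefix closure `L̄` of a language `L`. -/
def pcl (L : Set (List α)) : Set (List α) := {s | ∃ t ∈ L, s <+: t}

/-- Natural projection onto the observable event subset `A`:
keeps events in `A`, erases events not in `A`. -/
noncomputable def natProj (A : Set α) : List α → List α :=
  fun s => s.filter (fun a => @decide (a ∈ A) (Classical.propDecidable _))


/-- The disjunctive variant of relative coobservability: Definition 1 with
'or' in place of 'and' between the two implications in condition (i). -/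
def DisjVarRelCoobs (LG C K : Set (List α)) (So1 So2 Sc1 Sc2 : Set α) : Prop :=
  ∀ s s' s'' : List α,
    natProj So1 s = natProj So1 s' → natProj So2 s = natProj So2 s'' →
    ((∀ σ ∈ Sc1 ∩ Sc2,
        (s' ++ [σ] ∈ pcl K ∧ s ∈ pcl C ∧ s ++ [σ] ∈ LG → s ++ [σ] ∈ pcl K) ∨
        (s'' ++ [σ] ∈ pcl K ∧ s ∈ pcl C ∧ s ++ [σ] ∈ LG → s ++ [σ] ∈ pcl K)) ∧
     (∀ σ ∈ Sc1 \ Sc2,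
        s' ++ [σ] ∈ pcl K ∧ s ∈ pcl C ∧ s ++ [σ] ∈ LG → s ++ [σ] ∈ pcl K) ∧
     (∀ σ ∈ Sc2 \ Sc1,
        s'' ++ [σ] ∈ pcl K ∧ s ∈ pcl C ∧ s ++ [σ] ∈ LG → s ++ [σ] ∈ pcl K))


lemma natProj_nil' (A : Set α) : natProj A [] = [] := rfl
lemma natProj_cons_mem' {A : Set α} {x : α} (h : x ∈ A) (s : List α) :
    natProj A (x::s) = x :: natProj A s := by
  unfold natProj; rw [List.filter_cons]; simp [h]
lemma natProj_cons_not' {A : Set α} {x : α} (h : x ∉ A) (s : List α) :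
    natProj A (x::s) = natProj A s := by
  unfold natProj; rw [List.filter_cons]; simp [h]


lemma np0_0 : natProj ({0} : Set (Fin 3)) [0] = [0] := by
  rw [natProj_cons_mem' (by simp) [], natProj_nil']
lemma np0_1 : natProj ({0} : Set (Fin 3)) [1] = [] := by
  rw [natProj_cons_not' (by simp) [], natProj_nil']
lemma np0_01 : natProj ({0} : Set (Fin 3)) [0,1] = [0] := by
  rw [natProj_cons_mem' (by simp) [1], np0_1]
lemma np1_0 : natProj ({1} : Set (Fin 3)) [0] = [] := by
  rw [natProj_cons_not' (by simp) [], natProj_nil']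
lemma np1_1 : natProj ({1} : Set (Fin 3)) [1] = [1] := by
  rw [natProj_cons_mem' (by simp) [], natProj_nil']
lemma np1_01 : natProj ({1} : Set (Fin 3)) [0,1] = [1] := by
  rw [natProj_cons_not' (by simp) [1], np1_1]

def myLmG : Set (List (Fin 3)) := {[0,2],[1,2],[0,1,2]}

lemma snoc_prefix_two {x a b : Fin 3} {s : List (Fin 3)} (h : s ++ [x] <+: [a,b]) :
    (s = [] ∧ x = a) ∨ (s = [a] ∧ x = b) := by
  obtain ⟨u, hu⟩ := h
  rcases s with _ | ⟨c, _ | ⟨d, t⟩⟩ <;> simp_all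

lemma snoc_prefix_three {x a b c : Fin 3} {s : List (Fin 3)} (h : s ++ [x] <+: [a,b,c]) :
    (s = [] ∧ x = a) ∨ (s = [a] ∧ x = b) ∨ (s = [a,b] ∧ x = c) := by
  obtain ⟨u, hu⟩ := h
  rcases s with _ | ⟨d, _ | ⟨e, _ | ⟨f, t⟩⟩⟩ <;> simp_all

lemma mem_pcl_myLmG {s : List (Fin 3)} (h : s ++ [2] ∈ pcl myLmG) :
    s = [0] ∨ s = [1] ∨ s = [0,1] := by
  obtain ⟨t, ht, hpre⟩ := h
  rcases ht with h1 | h1 | h1 <;> subst h1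
  · rcases snoc_prefix_two hpre with ⟨hs, hx⟩ | ⟨hs, _⟩
    · exact absurd hx (by decide)
    · exact Or.inl hs
  · rcases snoc_prefix_two hpre with ⟨hs, hx⟩ | ⟨hs, _⟩
    · exact absurd hx (by decide)
    · exact Or.inr (Or.inl hs)
  · rcases snoc_prefix_three hpre with ⟨hs, hx⟩ | ⟨hs, hx⟩ | ⟨hs, _⟩
    · exact absurd hx (by decide)
    · exact absurd hx (by decide)
    · exact Or.inr (Or.inr hs)

lemma mem_pcl_singleton {t s : List (Fin 3)} : s ∈ pcl {t} ↔ s <+: t := by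
  simp [pcl]

/-- the disjunctive variant of relative coobservability is not
closed under set union. -/
theorem disjVar_relCoobs_not_closed_under_union :
    ∃ (E : Type) (_ : Fintype E) (LmG LG : Set (List E))
      (So1 So2 Sc1 Sc2 : Set E) (C K1 K2 : Set (List E)),
      pcl LmG = LG ∧ C ⊆ LmG ∧ K1 ⊆ C ∧ K2 ⊆ C ∧
      DisjVarRelCoobs LG C K1 So1 So2 Sc1 Sc2 ∧
      DisjVarRelCoobs LG C K2 So1 So2 Sc1 Sc2 ∧
      ¬ DisjVarRelCoobs LG C (K1 ∪ K2) So1 So2 Sc1 Sc2 := by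
  refine ⟨Fin 3, inferInstance, myLmG, pcl myLmG, {1}, {0}, {2}, {2}, myLmG,
    {[1,2]}, {[0,2]}, rfl, le_refl _, by simp [myLmG], by simp [myLmG], ?_, ?_, ?_⟩
  · -- K1 = {[1,2]} is disjunctively coobservable
    intro s s' s'' h1 h2
    refine ⟨?_, by simp, by simp⟩
    intro σ hσ
    have hσ2 : σ = 2 := by simpa using hσ.1
    subst hσ2
    right
    rintro ⟨h'', hC, hLG⟩
    rw [mem_pcl_singleton] at h''
    have hs'' : s'' = [1] := by
      rcases snoc_prefix_two h'' with ⟨hs, hx⟩ | ⟨hs, _⟩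
      · exact absurd hx (by decide)
      · exact hs
    subst hs''
    rcases mem_pcl_myLmG hLG with hs | hs | hs <;> subst hs
    · rw [np0_0, np0_1] at h2; simp at h2
    · exact mem_pcl_singleton.mpr List.prefix_rfl
    · rw [np0_01, np0_1] at h2; simp at h2
  · -- K2 = {[0,2]} is disjunctively coobservable
    intro s s' s'' h1 h2
    refine ⟨?_, by simp, by simp⟩
    intro σ hσ
    have hσ2 : σ = 2 := by simpa using hσ.1
    subst hσ2
    left
    rintro ⟨h', hC, hLG⟩
    rw [mem_pcl_singleton] at h'
    have hs' : s' = [0] := by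
      rcases snoc_prefix_two h' with ⟨hs, hx⟩ | ⟨hs, _⟩
      · exact absurd hx (by decide)
      · exact hs
    subst hs'
    rcases mem_pcl_myLmG hLG with hs | hs | hs <;> subst hs
    · exact mem_pcl_singleton.mpr List.prefix_rfl
    · rw [np1_1, np1_0] at h1; simp at h1
    · rw [np1_01, np1_0] at h1; simp at h1
  · -- the union is not disjunctively coobservable
    intro h
    have h1 : natProj ({1} : Set (Fin 3)) [0,1] = natProj {1} [1] := by
      rw [np1_01, np1_1]
    have h2 : natProj ({0} : Set (Fin 3)) [0,1] = natProj {0} [0] := by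
      rw [np0_01, np0_0]
    obtain ⟨hi, -, -⟩ := h [0,1] [1] [0] h1 h2
    have hi2 := hi 2 (by simp)
    have hC : ([0,1] : List (Fin 3)) ∈ pcl myLmG :=
      ⟨[0,1,2], by simp [myLmG], ⟨[2], rfl⟩⟩
    have hLG : ([0,1] : List (Fin 3)) ++ [2] ∈ pcl myLmG :=
      ⟨[0,1,2], by simp [myLmG], List.prefix_rfl⟩
    have hK1 : ([1] : List (Fin 3)) ++ [2] ∈ pcl ({[1,2]} ∪ {[0,2]}) :=
      ⟨[1,2], by simp, List.prefix_rfl⟩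
    have hK2 : ([0] : List (Fin 3)) ++ [2] ∈ pcl ({[1,2]} ∪ {[0,2]}) :=
      ⟨[0,2], by simp, List.prefix_rfl⟩
    have hnot : ([0,1] : List (Fin 3)) ++ [2] ∉ pcl ({[1,2]} ∪ {[0,2]}) := by
      rintro ⟨t, ht, hpre⟩
      rcases ht with ht | ht <;> subst ht
      · exact absurd hpre (by decide)
      · exact absurd hpre (by decide)
    rcases hi2 with hL | hR
    · exact hnot (hL ⟨hK1, hC, hLG⟩)
    · exact hnot (hR ⟨hK2, hC, hLG⟩)
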